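/- If φ ∈ L²(ℝ) and the shift-invariant space S(φ) generated by the integer translates of φ is invariant under all real translations, then the Lebesgue measure of the support of φ̂ is at most 1. Moreover, Σ_{k∈ℤ} χ_{supp(φ̂)}(ω+k) ≤ 1 for a.e. ω, i.e., supp(φ̂) is contained (up to measure zero) in a set of representatives of ℝ/ℤ. -/

import Mathlib

open MeasureTheory FourierTransform

noncomputable section

/-- The space `L²(ℝ)` of complex-valued square-integrable functions. -/
abbrev L2 := Lp ℂ 2 (volume : Measure ℝ)

/-- The translation operator `T_a f (x) = f (x - a)` on `L²(ℝ)`. -/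
def Tr (a : ℝ) : L2 → L2 :=
  Lp.compMeasurePreserving (fun x => x - a) (measurePreserving_sub_right volume a)

/-- `F` is the Fourier–Plancherel transform on `L²(ℝ)`: a unitary that agrees with the
classical Fourier integral `f̂(ω) = ∫ f(x) e^{-2πiωx} dx` on integrable functions. -/
def IsFourierTransform (F : L2 ≃ₗᵢ[ℂ] L2) : Prop :=
  ∀ f : L2, Integrable (f : ℝ → ℂ) volume → (F f : ℝ → ℂ) =ᵐ[volume] 𝓕 (f : ℝ → ℂ)

/-- The shift-invariant space generated by `f`: the closed span of integer translates. -/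
def SIS (f : L2) : Set L2 :=
  closure (Submodule.span ℂ {g : L2 | ∃ j : ℤ, g = Tr (j : ℝ) f} : Set L2)

open Real Set

/-!
Under the Fourier transform the integer translates of `φ` become `e^{-2πijω} φ̂`, multiples of `φ̂`
by 1-periodic functions, while the real translate `T_θ φ` becomes `e^{-2πiθω} φ̂`. For integers
`k ≠ l`, "`g / φ̂` takes the same value at `ω + k` and `ω + l`", written without division as
`g(ω+k) φ̂(ω+l) = g(ω+l) φ̂(ω+k)` a.e., is a linear condition that passes to `L²`-limits (along an
a.e. convergent subsequence), so it holds on the whole Fourier image of `S(φ)`. For `T_θ φ` with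
`θ (k - l) = 1/2` the two exponentials differ by a sign, which forces `φ̂(ω+k) φ̂(ω+l) = 0` a.e.
So for a.e. `ω` at most one `ω + k` lies in `supp φ̂`, and integrating over a period gives
`|supp φ̂| ≤ 1`.
-/

def modulation (a ω : ℝ) : ℂ := 𝐞 (-(a * ω))

lemma norm_modulation (a ω : ℝ) : ‖modulation a ω‖ = 1 := Circle.norm_coe _

lemma continuous_modulation (a : ℝ) : Continuous (modulation a) := by
  unfold modulation; fun_prop

lemma modulation_add (a ω t : ℝ) : modulation a (ω + t) = modulation a ω * 𝐞 (-(a * t)) := by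
  simp only [modulation, mul_add, neg_add, AddChar.map_add_eq_mul, Circle.coe_mul]

lemma modulation_intCast_add_intCast (j k : ℤ) (ω : ℝ) :
    modulation j (ω + k) = modulation j ω := by
  have h : 𝐞 (-((j : ℝ) * k)) = 1 := by
    rw [fourierChar_apply', ← Int.cast_mul, ← Int.cast_neg, Circle.exp_two_pi_mul_int]
  rw [modulation_add, h, Circle.coe_one, mul_one]

lemma modulation_add_ne {a t : ℝ} (h : a * t = 1 / 2) (ω : ℝ) :
    modulation a (ω + t) ≠ modulation a ω := by
  have he : 𝐞 (-(a * t)) ≠ 1 := by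
    rw [h, fourierChar_apply', show 2 * π * -(1 / 2) = -π by ring, Circle.exp_neg]
    exact inv_ne_one.2 Circle.exp_pi_ne_one
  have h0 : modulation a ω ≠ 0 := Circle.coe_ne_zero _
  rw [modulation_add, Ne, mul_eq_left₀ h0]
  rwa [← Circle.coe_one, Circle.coe_inj]

lemma fourier_comp_sub_right (f : ℝ → ℂ) (a w : ℝ) :
    𝓕 (fun x => f (x - a)) w = modulation a w * 𝓕 f w := by
  rw [fourier_real_eq, fourier_real_eq, ← integral_add_right_eq_self _ a, ← integral_const_mul]
  congr 1
  ext v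
  simp only [add_sub_cancel_right, Circle.smul_def, smul_eq_mul, modulation, add_mul, neg_add,
    AddChar.map_add_eq_mul, Circle.coe_mul]
  ring

lemma memLp_modulation_mul (a : ℝ) (g : L2) : MemLp (fun ω => modulation a ω * g ω) 2 volume :=
  (Lp.memLp g).of_le ((continuous_modulation a).aestronglyMeasurable.mul
    (Lp.aestronglyMeasurable g)) (ae_of_all _ fun ω => by rw [norm_mul, norm_modulation, one_mul])

def modulate (a : ℝ) : L2 →ₗᵢ[ℂ] L2 where
  toFun g := (memLp_modulation_mul a g).toLp _
  map_add' g h := by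
    rw [← MemLp.toLp_add]
    refine MemLp.toLp_congr _ _ ?_
    filter_upwards [Lp.coeFn_add g h] with ω hω
    rw [hω, Pi.add_apply, Pi.add_apply, mul_add]
  map_smul' c g := by
    rw [RingHom.id_apply, ← MemLp.toLp_const_smul]
    refine MemLp.toLp_congr _ _ ?_
    filter_upwards [Lp.coeFn_smul c g] with ω hω
    rw [hω, Pi.smul_apply, Pi.smul_apply, smul_eq_mul, smul_eq_mul, mul_left_comm]
  norm_map' g := by
    change ‖(memLp_modulation_mul a g).toLp _‖ = ‖g‖
    rw [Lp.norm_toLp, Lp.norm_def]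
    exact congrArg _ (eLpNorm_congr_norm_ae (ae_of_all _ fun ω => by
      rw [norm_mul, norm_modulation, one_mul]))

lemma coeFn_modulate (a : ℝ) (g : L2) : modulate a g =ᵐ[volume] fun ω => modulation a ω * g ω :=
  (memLp_modulation_mul a g).coeFn_toLp

lemma coeFn_Tr (a : ℝ) (f : L2) : Tr a f =ᵐ[volume] fun x => f (x - a) :=
  Lp.coeFn_compMeasurePreserving f _

lemma Tr_zero (f : L2) : Tr 0 f = f := by
  apply Lp.ext
  filter_upwards [coeFn_Tr 0 f] with x hx
  rw [hx, sub_zero]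

lemma self_mem_SIS (φ : L2) : φ ∈ SIS φ :=
  subset_closure (Submodule.subset_span ⟨0, by rw [Int.cast_zero, Tr_zero]⟩)

lemma continuous_Tr (a : ℝ) : Continuous (Tr a) :=
  (Lp.isometry_compMeasurePreserving _).continuous

namespace IsFourierTransform

variable {F : L2 ≃ₗᵢ[ℂ] L2}

lemma map_Tr_of_integrable (hF : IsFourierTransform F) (a : ℝ) {f : L2}
    (hf : Integrable f volume) : F (Tr a f) = modulate a (F f) := by
  have hTr := coeFn_Tr a f
  apply Lp.ext
  filter_upwards [hF _ ((hf.comp_sub_right a).congr hTr.symm), coeFn_modulate a (F f), hF f hf]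
    with ω hTrω hmod hω
  rw [hTrω, hmod, hω, fourier_congr_ae hTr, fourier_comp_sub_right]

lemma map_Tr (hF : IsFourierTransform F) (a : ℝ) (f : L2) : F (Tr a f) = modulate a (F f) := by
  refine Lp.induction ENNReal.ofNat_ne_top (fun f => F (Tr a f) = modulate a (F f)) ?_ ?_ ?_ f
  · intro c s hs hμs
    refine hF.map_Tr_of_integrable a ?_
    rw [Lp.simpleFunc.coe_indicatorConst]
    exact ((integrable_indicator_iff hs).2 (integrableOn_const hμs.ne)).congr
      indicatorConstLp_coeFn.symm
  · intro f g hf hg _ hTf hTg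
    have hTr : Tr a (hf.toLp f + hg.toLp g) = Tr a (hf.toLp f) + Tr a (hg.toLp g) := map_add _ _ _
    rw [hTr, map_add, map_add, hTf, hTg, map_add]
  · exact isClosed_eq (F.continuous.comp (continuous_Tr a))
      ((modulate a).continuous.comp F.continuous)

end IsFourierTransform

/-- `g / ψ` takes the same value at `ω + s` and at `ω + t` for a.e. `ω`, with the division
cleared, so nothing is asked where `ψ` vanishes. -/
def ratioShiftSubmodule (ψ : ℝ → ℂ) (s t : ℝ) : Submodule ℂ L2 where
  carrier := {g | ∀ᵐ ω, g (ω + s) * ψ (ω + t) = g (ω + t) * ψ (ω + s)}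
  zero_mem' := by
    have h0 := Lp.coeFn_zero ℂ 2 (volume : Measure ℝ)
    filter_upwards [(eventually_add_right_iff _ s).2 h0, (eventually_add_right_iff _ t).2 h0]
      with ω hs ht
    simp only [hs, ht, Pi.zero_apply, zero_mul]
  add_mem' {g h} hg hh := by
    have hadd := Lp.coeFn_add g h
    filter_upwards [hg, hh, (eventually_add_right_iff _ s).2 hadd,
      (eventually_add_right_iff _ t).2 hadd] with ω hgω hhω hs ht
    simp only [hs, ht, Pi.add_apply, add_mul, hgω, hhω]
  smul_mem' c g hg := by
    have hsmul := Lp.coeFn_smul c g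
    filter_upwards [hg, (eventually_add_right_iff _ s).2 hsmul,
      (eventually_add_right_iff _ t).2 hsmul] with ω hgω hs ht
    simp only [hs, ht, Pi.smul_apply, smul_eq_mul, mul_assoc, hgω]

lemma isClosed_ratioShiftSubmodule (ψ : ℝ → ℂ) (s t : ℝ) :
    IsClosed (ratioShiftSubmodule ψ s t : Set L2) := by
  refine isClosed_of_closure_subset fun g hg => ?_
  obtain ⟨u, hu, hlim⟩ := mem_closure_iff_seq_limit.1 hg
  obtain ⟨ns, -, hae⟩ := (tendstoInMeasure_of_tendsto_Lp hlim).exists_seq_tendsto_ae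
  filter_upwards [(eventually_add_right_iff _ s).2 hae, (eventually_add_right_iff _ t).2 hae,
    ae_all_iff.2 fun i => hu (ns i)] with ω hs ht hu
  exact tendsto_nhds_unique ((hs.mul_const _).congr hu) (ht.mul_const _)

lemma modulate_intCast_mem_ratioShiftSubmodule (j k l : ℤ) (ψ : L2) :
    modulate j ψ ∈ ratioShiftSubmodule ψ k l := by
  have hmod := coeFn_modulate j ψ
  filter_upwards [(eventually_add_right_iff _ (k : ℝ)).2 hmod,
    (eventually_add_right_iff _ (l : ℝ)).2 hmod] with ω hk hl
  rw [hk, hl, modulation_intCast_add_intCast, modulation_intCast_add_intCast]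
  ring

namespace IsFourierTransform

variable {F : L2 ≃ₗᵢ[ℂ] L2}

lemma SIS_subset_preimage_ratioShiftSubmodule (hF : IsFourierTransform F) (φ : L2) (k l : ℤ) :
    SIS φ ⊆ F ⁻¹' ratioShiftSubmodule (F φ) k l := by
  refine closure_minimal ?_ ((isClosed_ratioShiftSubmodule _ _ _).preimage F.continuous)
  show Submodule.span ℂ _ ≤ (ratioShiftSubmodule (F φ) k l).comap F.toLinearEquiv.toLinearMap
  rw [Submodule.span_le]
  rintro _ ⟨j, rfl⟩
  show F (Tr j φ) ∈ ratioShiftSubmodule (F φ) k l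
  rw [hF.map_Tr]
  exact modulate_intCast_mem_ratioShiftSubmodule j k l (F φ)

lemma mul_comp_add_intCast_eq_zero (hF : IsFourierTransform F) {φ : L2}
    (hφ : ∀ θ : ℝ, Tr θ φ ∈ SIS φ) {k l : ℤ} (hkl : k ≠ l) :
    ∀ᵐ ω, F φ (ω + k) * F φ (ω + l) = 0 := by
  have hkl' : (k : ℝ) - l ≠ 0 := sub_ne_zero.2 (Int.cast_injective.ne hkl)
  obtain ⟨θ, hθ⟩ : ∃ θ : ℝ, θ * ((k : ℝ) - l) = 1 / 2 := ⟨(2 * ((k : ℝ) - l))⁻¹, by field_simp⟩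
  have hmem := hF.SIS_subset_preimage_ratioShiftSubmodule φ k l (hφ θ)
  rw [mem_preimage, hF.map_Tr] at hmem
  have hmod := coeFn_modulate θ (F φ)
  filter_upwards [hmem, (eventually_add_right_iff _ (k : ℝ)).2 hmod,
    (eventually_add_right_iff _ (l : ℝ)).2 hmod] with ω h hk hl
  rw [hk, hl] at h
  have hne : modulation θ (ω + k) ≠ modulation θ (ω + l) := by
    simpa only [add_add_sub_cancel] using modulation_add_ne hθ (ω + l)
  have : (modulation θ (ω + k) - modulation θ (ω + l)) * (F φ (ω + k) * F φ (ω + l)) = 0 := by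
    linear_combination h
  exact (mul_eq_zero.1 this).resolve_left (sub_ne_zero.2 hne)

lemma ae_subsingleton_support_comp_add_intCast (hF : IsFourierTransform F) {φ : L2}
    (hφ : ∀ θ : ℝ, Tr θ φ ∈ SIS φ) :
    ∀ᵐ ω, {k : ℤ | F φ (ω + k) ≠ 0}.Subsingleton := by
  have h : ∀ᵐ ω, ∀ k l : ℤ, k ≠ l → F φ (ω + k) * F φ (ω + l) = 0 :=
    ae_all_iff.2 fun k => ae_all_iff.2 fun l => by
      by_cases hkl : k = l
      · exact ae_of_all _ fun _ h => absurd hkl h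
      · exact (hF.mul_comp_add_intCast_eq_zero hφ hkl).mono fun _ h _ => h
  filter_upwards [h] with ω h k hk l hl
  by_contra hkl
  exact mul_ne_zero hk hl (h k l hkl)

end IsFourierTransform

lemma tsum_indicator_one_le_one {ι : Type*} {s : Set ι} (hs : s.Subsingleton) :
    ∑' i, s.indicator (fun _ => (1 : ENNReal)) i ≤ 1 := by
  rcases hs.eq_empty_or_singleton with rfl | ⟨i, rfl⟩
  · simp
  · rw [← tsum_subtype]; simp

lemma lintegral_eq_setLIntegral_Ioc_tsum_intCast {f : ℝ → ENNReal} (hf : Measurable f) :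
    ∫⁻ x, f x = ∫⁻ x in Ioc 0 1, ∑' n : ℤ, f (x + n) := by
  rw [lintegral_tsum (f := fun (n : ℤ) x => f (x + n)) fun n => by fun_prop,
    ← setLIntegral_univ, ← iUnion_Ioc_intCast,
    lintegral_iUnion (fun _ => measurableSet_Ioc) (pairwise_disjoint_Ioc_intCast ℝ)]
  refine tsum_congr fun n => ?_
  rw [← (measurePreserving_add_right volume (n : ℝ)).setLIntegral_comp_preimage
    measurableSet_Ioc hf]
  congr 2
  ext x
  simp

lemma volume_le_one_of_ae_tsum_indicator_le_one {E : Set ℝ} (hE : MeasurableSet E)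
    (h : ∀ᵐ ω, ∑' k : ℤ, E.indicator (fun _ => (1 : ENNReal)) (ω + k) ≤ 1) : volume E ≤ 1 :=
  calc volume E = ∫⁻ ω, E.indicator (fun _ => 1) ω := (lintegral_indicator_one hE).symm
    _ = ∫⁻ ω in Ioc 0 1, ∑' k : ℤ, E.indicator (fun _ => 1) (ω + k) :=
      lintegral_eq_setLIntegral_Ioc_tsum_intCast (measurable_const.indicator hE)
    _ ≤ ∫⁻ _ in Ioc 0 1, 1 := lintegral_mono_ae (ae_restrict_of_ae h)
    _ = 1 := by simp

/-- If `S(φ)` is invariant under all real translations, then `|supp φ̂| ≤ 1`; moreover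
`Σ_{k∈ℤ} χ_{supp φ̂}(ω+k) ≤ 1` for a.e. `ω`, i.e. `supp φ̂` is (up to null sets) contained
in a set of representatives of `ℝ/ℤ`. -/
theorem stmt18 (F : L2 ≃ₗᵢ[ℂ] L2) (hF : IsFourierTransform F)
    (φ : L2) (hTI : ∀ θ : ℝ, ∀ f ∈ SIS φ, Tr θ f ∈ SIS φ) :
    volume {ω : ℝ | (F φ : ℝ → ℂ) ω ≠ 0} ≤ 1 ∧
    ∀ᵐ ω ∂(volume : Measure ℝ),
      (∑' k : ℤ, ({ω' : ℝ | (F φ : ℝ → ℂ) ω' ≠ 0}.indicator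
        (fun _ => (1 : ENNReal)) (ω + k))) ≤ 1 := by
  have hsum : ∀ᵐ ω, ∑' k : ℤ, {ω' | F φ ω' ≠ 0}.indicator (fun _ => (1 : ENNReal)) (ω + k) ≤ 1 :=
    (hF.ae_subsingleton_support_comp_add_intCast fun θ => hTI θ φ (self_mem_SIS φ)).mono
      fun _ hω => tsum_indicator_one_le_one hω
  exact ⟨volume_le_one_of_ae_tsum_indicator_le_one
    (measurableSet_support (Lp.stronglyMeasurable (F φ)).measurable) hsum, hsum⟩
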